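/- Let V : Σ → SL(2,ℝ) ⊂ ℝ^{2,2} be a smooth spacelike embedding into the double cover of AdS³ with unit future normal n_x at each point, all with non-degenerate shape operator B. Define the dual map V*(x) = n_x. Then: (1) dV*_x(v) = −Bv, so V* is an immersion; (2) the metric induced by V* equals the third fundamental form III of V; (3) the shape operator of V* pulled back via V* equals B⁻¹; (4) if the induced metric of V has constant curvature K, then the metric induced by V* has constant curvature K* = −K/(K+1). -/

import Mathlib

/-!
STATEMENT 15: polar duality for spacelike surfaces in (the double cover of)
`AdS³`.  For a smooth spacelike embedding `V : Σ → SL(2,ℝ) ⊂ ℝ^{2,2}` with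
unit (timelike) normal field `n` and non-degenerate shape operator `B`
(defined by `dn = −dV∘B`), the dual map `V* = n` satisfies:
(1) `dV*(v) = −Bv`, so `V*` is an immersion;
(2) the metric induced by `V*` is the third fundamental form `III = BᵀIB`;
(3) the shape operator of `V*` is `B⁻¹` (i.e. `dV = −dV*∘B⁻¹`, `V` being the
    unit normal of `V*`);
(4) if the induced metric of `V` has constant curvature `K` then the metric
    induced by `V*` has constant curvature `K* = −K/(K+1)` — curvatures being
    given by the AdS Gauss equation `K = −1 − det B`.

Model: `ℝ^{2,2}` is the space `W = Fin 2 → Fin 2 → ℝ` of `2×2` matrices with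
`Q(X) = −det X` and polarization `⟨·,·⟩`; `SL(2,ℝ) = {Q = −1}`; the surface is
parametrized by an open set `Ω ⊆ ℝ²`.
-/

open Matrix

noncomputable section

/-- `2×2` real matrices as a function type (so that it carries the standard
normed-space structure for differentiation). -/
abbrev W := Fin 2 → Fin 2 → ℝ

/-- The quadratic form of signature `(2,2)` on `W`. -/
def Qf (X : W) : ℝ := -(Matrix.of X).det

/-- Its polarization. -/
def bf (X Y : W) : ℝ := (Qf (X + Y) - Qf X - Qf Y) / 2

/-- Standard basis of `ℝ²`. -/
def e2 : Fin 2 → ℝ × ℝ := ![(1, 0), (0, 1)]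

/-- `i`-th partial derivative. -/
def pdv (V : ℝ × ℝ → W) (i : Fin 2) (u : ℝ × ℝ) : W := fderiv ℝ V u (e2 i)

/-- First fundamental form of `V` with respect to `⟨·,·⟩`. -/
def firstFF (V : ℝ × ℝ → W) (u : ℝ × ℝ) : Matrix (Fin 2) (Fin 2) ℝ :=
  Matrix.of fun i j => bf (pdv V i u) (pdv V j u)

lemma bf_eq (X Y : W) :
    bf X Y = -(X 0 0 * Y 1 1 + Y 0 0 * X 1 1 - X 0 1 * Y 1 0 - Y 0 1 * X 1 0) / 2 := by
  simp [bf, Qf, Matrix.det_fin_two, Matrix.of_apply, Pi.add_apply]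
  ring

lemma bf_comb (a b c d : ℝ) (X Y : W) :
    bf (-(a • X + b • Y)) (-(c • X + d • Y)) =
      a * c * bf X X + a * d * bf X Y + b * c * bf Y X + b * d * bf Y Y := by
  simp [bf_eq, Pi.neg_apply, Pi.add_apply, Pi.smul_apply, smul_eq_mul]
  ring

theorem stmt15 (Ω : Set (ℝ × ℝ)) (hΩ : IsOpen Ω)
    (V n : ℝ × ℝ → W) (B : ℝ × ℝ → Matrix (Fin 2) (Fin 2) ℝ)
    (hV : ContDiffOn ℝ (⊤ : ℕ∞) V Ω) (hn : ContDiffOn ℝ (⊤ : ℕ∞) n Ω)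
    -- `V` takes values in `SL(2,ℝ)`:
    (hSL : ∀ u ∈ Ω, Qf (V u) = -1)
    -- `V` is a spacelike immersion:
    (himm : ∀ u ∈ Ω, LinearIndependent ℝ ![pdv V 0 u, pdv V 1 u])
    (hspace : ∀ u ∈ Ω, (firstFF V u).PosDef)
    -- `n` is the unit timelike normal:
    (hunit : ∀ u ∈ Ω, Qf (n u) = -1)
    (horth : ∀ u ∈ Ω, bf (n u) (V u) = 0 ∧ ∀ i, bf (n u) (pdv V i u) = 0)
    -- `B` is the shape operator: `dn = −dV ∘ B`:
    (hshape : ∀ u ∈ Ω, ∀ i, pdv n i u = -(∑ j, B u j i • pdv V j u))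
    -- `B` is non-degenerate:
    (hnondeg : ∀ u ∈ Ω, IsUnit (B u)) :
    ∀ u ∈ Ω,
      -- (1) `dV*(v) = −Bv` and `V* = n` is an immersion:
      ((∀ i, pdv n i u = -(∑ j, B u j i • pdv V j u)) ∧
        LinearIndependent ℝ ![pdv n 0 u, pdv n 1 u]) ∧
      -- (2) the metric induced by `V*` is the third fundamental form of `V`:
      firstFF n u = (B u)ᵀ * firstFF V u * B u ∧
      -- (3) the shape operator of `V*` is `B⁻¹`:
      (∀ i, pdv V i u = -(∑ j, (B u)⁻¹ j i • pdv n j u)) ∧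
      -- (4) constant curvature `K` dualizes to `K* = −K/(K+1)`:
      (∀ K : ℝ, (∀ w ∈ Ω, -1 - (B w).det = K) →
        -1 - ((B u)⁻¹).det = -K / (K + 1)) := by
  intro u hu
  have hdet : IsUnit (B u).det := (Matrix.isUnit_iff_isUnit_det _).mp (hnondeg u hu)
  have hBB : B u * (B u)⁻¹ = 1 := Matrix.mul_nonsing_inv _ hdet
  have hBB' : (B u)⁻¹ * B u = 1 := Matrix.nonsing_inv_mul _ hdet
  have hsh : ∀ i, pdv n i u =
      -(B u 0 i • pdv V 0 u + B u 1 i • pdv V 1 u) := by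
    intro i
    rw [hshape u hu i, Fin.sum_univ_two]
  refine ⟨⟨hshape u hu, ?_⟩, ?_, ?_, ?_⟩
  · -- linear independence
    rw [Fintype.linearIndependent_iff]
    intro g hg
    have hVli := (Fintype.linearIndependent_iff.mp (himm u hu))
    have : (g 0 * B u 0 0 + g 1 * B u 0 1) • pdv V 0 u
        + (g 0 * B u 1 0 + g 1 * B u 1 1) • pdv V 1 u = 0 := by
      have := hg
      simp only [Fin.sum_univ_two, Matrix.cons_val_zero, Matrix.cons_val_one,
        Matrix.head_cons, hsh] at this
      rw [← neg_eq_zero, ← this]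
      module
    have h0 := hVli (fun i => if i = 0 then (g 0 * B u 0 0 + g 1 * B u 0 1)
        else (g 0 * B u 1 0 + g 1 * B u 1 1)) (by
      simpa [Fin.sum_univ_two] using this)
    have e0 : g 0 * B u 0 0 + g 1 * B u 0 1 = 0 := by simpa using h0 0
    have e1 : g 0 * B u 1 0 + g 1 * B u 1 1 = 0 := by simpa using h0 1
    -- so B *ᵥ g = 0
    have hm : B u *ᵥ g = 0 := by
      funext i
      fin_cases i <;>
        simp [Matrix.mulVec, dotProduct, Fin.sum_univ_two] <;>
        linarith [e0, e1]
    have : g = 0 := by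
      have := congrArg (fun v => (B u)⁻¹ *ᵥ v) hm
      rw [Matrix.mulVec_mulVec, hBB', Matrix.one_mulVec, Matrix.mulVec_zero] at this
      exact this
    intro i; rw [this]; rfl
  · -- (2)
    ext i j
    have lhs : firstFF n u i j =
        B u 0 i * B u 0 j * bf (pdv V 0 u) (pdv V 0 u)
        + B u 0 i * B u 1 j * bf (pdv V 0 u) (pdv V 1 u)
        + B u 1 i * B u 0 j * bf (pdv V 1 u) (pdv V 0 u)
        + B u 1 i * B u 1 j * bf (pdv V 1 u) (pdv V 1 u) := by
      simp only [firstFF, Matrix.of_apply, hsh]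
      exact bf_comb _ _ _ _ _ _
    rw [lhs]
    simp [Matrix.mul_apply, Fin.sum_univ_two, firstFF, Matrix.transpose_apply,
      Matrix.of_apply]
    ring
  · -- (3)
    intro i
    have key : -(∑ j, (B u)⁻¹ j i • pdv n j u)
        = ((B u * (B u)⁻¹) 0 i) • pdv V 0 u + ((B u * (B u)⁻¹) 1 i) • pdv V 1 u := by
      simp only [Fin.sum_univ_two, hsh, Matrix.mul_apply]
      module
    rw [key, hBB]
    fin_cases i <;> simp [Matrix.one_apply]
  · -- (4)
    intro K hK
    have hKu : (B u).det = -1 - K := by have := hK u hu; linarith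
    have hdet0 : (B u).det ≠ 0 := hdet.ne_zero
    have hK1 : K + 1 ≠ 0 := by
      intro h
      apply hdet0
      rw [hKu]; linarith
    have hne : -1 - K ≠ 0 := by intro h; apply hK1; linarith
    rw [Matrix.det_nonsing_inv, Ring.inverse_eq_inv', hKu]
    field_simp
    ring

end
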